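/- Let Ω = {β_1,…,β_{−1}} be a maximal square in a simply-laced root system Φ of type D_l (l≥5) or E_l, with roots of length 1, and let ρ ∈ Φ with ρ ∉ Ω and −ρ ∉ Ω. If (ρ,β_i) = (ρ,β_{−i}) = 0 for some i, then for every index j either (ρ,β_j) = (ρ,β_{−j}) = 0, or one of (ρ,β_j), (ρ,β_{−j}) equals 1/2 and the other equals −1/2. -/

import Mathlib

open scoped RealInnerProductSpace

noncomputable section

/-- The root system of type `D_l`, normalized so all roots have length `1`:
the vectors `(±eᵢ ± eⱼ)/√2` for `i ≠ j`. -/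
def Droots (l : ℕ) : Set (EuclideanSpace ℝ (Fin l)) :=
  {v | ∃ i j : Fin l, i ≠ j ∧ ∃ a b : ℝ, (a = 1 ∨ a = -1) ∧ (b = 1 ∨ b = -1) ∧
    ∀ t, v t = (a * (if t = i then 1 else 0) + b * (if t = j then 1 else 0)) / Real.sqrt 2}

/-- The root system of type `E₈`, normalized so all roots have length `1`:
the vectors `(±eᵢ ± eⱼ)/√2` (`i ≠ j`) together with `(ε₁,…,ε₈)/(2√2)` where
each `εᵢ = ±1` and the number of minus signs is even. -/
def E8roots : Set (EuclideanSpace ℝ (Fin 8)) :=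
  {v | (∃ i j : Fin 8, i ≠ j ∧ ∃ a b : ℝ, (a = 1 ∨ a = -1) ∧ (b = 1 ∨ b = -1) ∧
      ∀ t, v t = (a * (if t = i then 1 else 0) + b * (if t = j then 1 else 0)) / Real.sqrt 2) ∨
    (∃ ε : Fin 8 → ℝ, (∀ i, ε i = 1 ∨ ε i = -1) ∧
      Even (Finset.univ.filter (fun i => ε i = -1)).card ∧
      ∀ t, v t = ε t / (2 * Real.sqrt 2))}

/-- The root system of type `E₇`: the roots of `E₈` orthogonal to the root
`(e₇ + e₈)/√2`. -/
def E7roots : Set (EuclideanSpace ℝ (Fin 8)) := {v ∈ E8roots | v 6 + v 7 = 0}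

/-- The root system of type `E₆`: the roots of `E₈` orthogonal to the
`A₂`-pair `(e₇+e₈)/√2`, `(e₆+e₇)/√2`. -/
def E6roots : Set (EuclideanSpace ℝ (Fin 8)) :=
  {v ∈ E8roots | v 6 + v 7 = 0 ∧ v 5 + v 6 = 0}

/-- `Φ ⊆ E` is (the image under a linear isometry of) a root system of type
`D_l` (`l ≥ 5`) or `E₆`, `E₇`, `E₈`, with all roots of length `1`. -/
def IsDERootSystem {E : Type*} [NormedAddCommGroup E] [InnerProductSpace ℝ E]
    (Φ : Set E) : Prop :=
  (∃ l : ℕ, 5 ≤ l ∧ ∃ f : EuclideanSpace ℝ (Fin l) →ₗᵢ[ℝ] E, Φ = f '' Droots l) ∨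
  (∃ f : EuclideanSpace ℝ (Fin 8) →ₗᵢ[ℝ] E,
    Φ = f '' E6roots ∨ Φ = f '' E7roots ∨ Φ = f '' E8roots)

end

/-- A maximal square in `Φ`: a family of roots `β_{±1},…,β_{±k}` (here indexed by
`Fin k × Bool`, the pair `(i, true)`/`(i, false)` playing the role of `β_{i}, β_{-i}`)
with `(β_i, β_{-i}) = 0` and `(β_i, β_j) = 1/2` for `i ≠ ±j`. -/
def IsMaximalSquare {E : Type*} [NormedAddCommGroup E] [InnerProductSpace ℝ E]
    (Φ : Set E) (k : ℕ) (β : Fin k → Bool → E) : Prop :=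
  (∀ i b, β i b ∈ Φ) ∧ (∀ i, ⟪β i true, β i false⟫ = 0) ∧
  (∀ i j, i ≠ j → ∀ b c, ⟪β i b, β j c⟫ = 1 / 2)

/- ### Auxiliary lemmas -/

section Aux

lemma RootAux.inner_pair {n : ℕ} (i j : Fin n) (hij : i ≠ j) (v w : EuclideanSpace ℝ (Fin n))
    (hv : ∀ t, t ≠ i → t ≠ j → v t = 0) : ⟪v, w⟫ = v i * w i + v j * w j := by
  rw [PiLp.inner_apply]
  simp only [RCLike.inner_apply, starRingEnd_apply, star_trivial]
  rw [← Finset.sum_subset (Finset.subset_univ {i, j})]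
  · rw [Finset.sum_pair hij]; ring
  · intro t _ ht
    simp only [Finset.mem_insert, Finset.mem_singleton, not_or] at ht
    rw [hv t ht.1 ht.2, mul_zero]

lemma RootAux.droot_off {n : ℕ} {v : EuclideanSpace ℝ (Fin n)} {i j : Fin n} {a b : ℝ}
    (hv : ∀ t, v t = (a * (if t = i then 1 else 0) + b * (if t = j then 1 else 0)) / Real.sqrt 2) :
    ∀ t, t ≠ i → t ≠ j → v t = 0 := by
  intro t h1 h2; rw [hv t, if_neg h1, if_neg h2]; ring

lemma RootAux.dd_inner {n : ℕ} {v w : EuclideanSpace ℝ (Fin n)}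
    (hv : ∃ i j : Fin n, i ≠ j ∧ ∃ a b : ℝ, (a = 1 ∨ a = -1) ∧ (b = 1 ∨ b = -1) ∧
      ∀ t, v t = (a * (if t = i then 1 else 0) + b * (if t = j then 1 else 0)) / Real.sqrt 2)
    (hw : ∃ i j : Fin n, i ≠ j ∧ ∃ a b : ℝ, (a = 1 ∨ a = -1) ∧ (b = 1 ∨ b = -1) ∧
      ∀ t, w t = (a * (if t = i then 1 else 0) + b * (if t = j then 1 else 0)) / Real.sqrt 2) :
    ⟪v,w⟫ = 0 ∨ ⟪v,w⟫ = 1/2 ∨ ⟪v,w⟫ = -(1/2) ∨ ⟪v,w⟫ = 1 ∨ ⟪v,w⟫ = -1 := by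
  obtain ⟨i, j, hij, a, b, ha, hb, hv⟩ := hv
  obtain ⟨i', j', hij', a', b', ha', hb', hw⟩ := hw
  have h2 : Real.sqrt 2 * Real.sqrt 2 = 2 := Real.mul_self_sqrt (by norm_num)
  have key : ⟪v,w⟫ = (a * (a' * (if i = i' then (1:ℝ) else 0) + b' * (if i = j' then 1 else 0)) +
      b * (a' * (if j = i' then (1:ℝ) else 0) + b' * (if j = j' then 1 else 0))) / 2 := by
    rw [RootAux.inner_pair i j hij v w (RootAux.droot_off hv), hv i, hv j, hw i, hw j,
      if_pos rfl, if_pos rfl, if_neg hij, if_neg (Ne.symm hij),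
      div_mul_div_comm, div_mul_div_comm, h2]
    ring
  rw [key]
  split_ifs with A B C D C D D D <;>
  first
    | (exfalso; subst_vars; exact hij rfl)
    | (exfalso; subst_vars; exact hij' rfl)
    | (rcases ha with rfl|rfl <;> rcases hb with rfl|rfl <;>
       rcases ha' with rfl|rfl <;> rcases hb' with rfl|rfl <;> norm_num)

lemma RootAux.dd_norm {n : ℕ} {v : EuclideanSpace ℝ (Fin n)} {i j : Fin n} {a b : ℝ}
    (hij : i ≠ j) (ha : a = 1 ∨ a = -1) (hb : b = 1 ∨ b = -1)
    (hv : ∀ t, v t = (a * (if t = i then 1 else 0) + b * (if t = j then 1 else 0)) / Real.sqrt 2) :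
    ⟪v,v⟫ = 1 := by
  have h2 : Real.sqrt 2 * Real.sqrt 2 = 2 := Real.mul_self_sqrt (by norm_num)
  rw [RootAux.inner_pair i j hij v v (RootAux.droot_off hv), hv i, hv j,
    if_pos rfl, if_pos rfl, if_neg hij, if_neg (Ne.symm hij),
    div_mul_div_comm, div_mul_div_comm, h2]
  rcases ha with rfl|rfl <;> rcases hb with rfl|rfl <;> norm_num

lemma RootAux.aux_mul (x y : ℝ) :
    (x / Real.sqrt 2) * (y / (2 * Real.sqrt 2)) = x * y / 4 := by
  have h2 : Real.sqrt 2 * Real.sqrt 2 = 2 := Real.mul_self_sqrt (by norm_num)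
  rw [div_mul_div_comm]
  have : Real.sqrt 2 * (2 * Real.sqrt 2) = 4 := by nlinarith
  rw [this]

lemma RootAux.aux_mul8 (x y : ℝ) :
    (x / (2 * Real.sqrt 2)) * (y / (2 * Real.sqrt 2)) = x * y / 8 := by
  have h2 : Real.sqrt 2 * Real.sqrt 2 = 2 := Real.mul_self_sqrt (by norm_num)
  rw [div_mul_div_comm]
  have : (2 * Real.sqrt 2) * (2 * Real.sqrt 2) = 8 := by nlinarith
  rw [this]

lemma RootAux.ds_inner {v w : EuclideanSpace ℝ (Fin 8)}
    (hv : ∃ i j : Fin 8, i ≠ j ∧ ∃ a b : ℝ, (a = 1 ∨ a = -1) ∧ (b = 1 ∨ b = -1) ∧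
      ∀ t, v t = (a * (if t = i then 1 else 0) + b * (if t = j then 1 else 0)) / Real.sqrt 2)
    (hw : ∃ ε : Fin 8 → ℝ, (∀ i, ε i = 1 ∨ ε i = -1) ∧
      Even (Finset.univ.filter (fun i => ε i = -1)).card ∧
      ∀ t, w t = ε t / (2 * Real.sqrt 2)) :
    ⟪v,w⟫ = 0 ∨ ⟪v,w⟫ = 1/2 ∨ ⟪v,w⟫ = -(1/2) ∨ ⟪v,w⟫ = 1 ∨ ⟪v,w⟫ = -1 := by
  obtain ⟨i, j, hij, a, b, ha, hb, hv⟩ := hv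
  obtain ⟨ε, hε, -, hw⟩ := hw
  rw [RootAux.inner_pair i j hij v w (RootAux.droot_off hv), hv i, hv j, hw i, hw j,
    if_pos rfl, if_pos rfl, if_neg hij, if_neg (Ne.symm hij),
    RootAux.aux_mul, RootAux.aux_mul]
  rcases ha with rfl|rfl <;> rcases hb with rfl|rfl <;>
    rcases hε i with h|h <;> rcases hε j with h'|h' <;> rw [h, h'] <;> norm_num

lemma RootAux.prod_signs (δ : Fin 8 → ℝ) (hδ : ∀ t, δ t = 1 ∨ δ t = -1) :
    ∏ t, δ t = (-1)^((Finset.univ.filter (fun t => δ t = -1)).card) := by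
  classical
  rw [← Finset.prod_filter_mul_prod_filter_not Finset.univ (fun t => δ t = -1)]
  have h1 : ∏ t ∈ Finset.univ.filter (fun t => δ t = -1), δ t
      = (-1)^((Finset.univ.filter (fun t => δ t = -1)).card) := by
    rw [Finset.prod_congr rfl (fun t ht => (Finset.mem_filter.mp ht).2), Finset.prod_const]
  have h2 : ∏ t ∈ Finset.univ.filter (fun t => ¬ δ t = -1), δ t = 1 := by
    rw [Finset.prod_congr rfl (fun t ht => (hδ t).resolve_right (Finset.mem_filter.mp ht).2),
      Finset.prod_const_one]
  rw [h1, h2, mul_one]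

lemma RootAux.spin_sum (ε ε' : Fin 8 → ℝ) (hε : ∀ t, ε t = 1 ∨ ε t = -1)
    (hε' : ∀ t, ε' t = 1 ∨ ε' t = -1)
    (he : Even (Finset.univ.filter (fun i => ε i = -1)).card)
    (he' : Even (Finset.univ.filter (fun i => ε' i = -1)).card) :
    ∑ t, ε t * ε' t = 8 ∨ ∑ t, ε t * ε' t = 4 ∨ ∑ t, ε t * ε' t = 0 ∨
    ∑ t, ε t * ε' t = -4 ∨ ∑ t, ε t * ε' t = -8 := by
  classical
  have hterm : ∀ t, ε t * ε' t = if ε t = ε' t then (1:ℝ) else -1 := by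
    intro t; rcases hε t with h|h <;> rcases hε' t with h'|h' <;> rw [h,h'] <;> norm_num
  have hpm : ∀ t, ε t * ε' t = 1 ∨ ε t * ε' t = -1 := by
    intro t; rcases hε t with h|h <;> rcases hε' t with h'|h' <;> rw [h,h'] <;> norm_num
  have hprodmul : ∏ t, ε t * ε' t = 1 := by
    rw [Finset.prod_mul_distrib, RootAux.prod_signs ε hε, RootAux.prod_signs ε' hε',
      he.neg_one_pow, he'.neg_one_pow, mul_one]
  have hfil : Finset.univ.filter (fun t => ε t * ε' t = -1)
      = Finset.univ.filter (fun t => ¬ ε t = ε' t) := by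
    apply Finset.filter_congr
    intro t _
    rcases hε t with h|h <;> rcases hε' t with h'|h' <;> rw [h,h'] <;> norm_num
  set c := (Finset.univ.filter (fun t => ε t = ε' t)).card with hc
  set d := (Finset.univ.filter (fun t => ¬ ε t = ε' t)).card with hd
  have hcd : c + d = 8 :=
    Finset.card_filter_add_card_filter_not (fun t => ε t = ε' t)
  have hsum : ∑ t, ε t * ε' t = (c:ℝ) - d := by
    rw [Finset.sum_congr rfl (fun t _ => hterm t), Finset.sum_ite, Finset.sum_const,
      Finset.sum_const, ← hc, ← hd]
    ring
  have hdeven : Even d := by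
    have hp := RootAux.prod_signs (fun t => ε t * ε' t) hpm
    rw [hprodmul, hfil, ← hd] at hp
    exact (neg_one_pow_eq_one_iff_even (by norm_num : (-1:ℝ) ≠ 1)).mp hp.symm
  clear_value c d
  obtain ⟨m, rfl⟩ := hdeven
  have hm : m ≤ 4 := by omega
  have hcr : (c:ℝ) = 8 - ((m:ℝ)+(m:ℝ)) := by
    have : (c:ℝ) + ((m:ℝ)+(m:ℝ)) = 8 := by exact_mod_cast congrArg (Nat.cast : ℕ → ℝ) hcd
    linarith
  rw [hsum, hcr]
  push_cast
  interval_cases m <;> norm_num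

lemma RootAux.ss_inner {v w : EuclideanSpace ℝ (Fin 8)}
    (hv : ∃ ε : Fin 8 → ℝ, (∀ i, ε i = 1 ∨ ε i = -1) ∧
      Even (Finset.univ.filter (fun i => ε i = -1)).card ∧
      ∀ t, v t = ε t / (2 * Real.sqrt 2))
    (hw : ∃ ε : Fin 8 → ℝ, (∀ i, ε i = 1 ∨ ε i = -1) ∧
      Even (Finset.univ.filter (fun i => ε i = -1)).card ∧
      ∀ t, w t = ε t / (2 * Real.sqrt 2)) :
    ⟪v,w⟫ = 0 ∨ ⟪v,w⟫ = 1/2 ∨ ⟪v,w⟫ = -(1/2) ∨ ⟪v,w⟫ = 1 ∨ ⟪v,w⟫ = -1 := by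
  obtain ⟨ε, hε, he, hv⟩ := hv
  obtain ⟨ε', hε', he', hw⟩ := hw
  have key : ⟪v,w⟫ = (∑ t, ε t * ε' t) / 8 := by
    rw [PiLp.inner_apply]
    simp only [RCLike.inner_apply, starRingEnd_apply, star_trivial]
    rw [Finset.sum_congr rfl (fun t _ => by rw [hv t, hw t, RootAux.aux_mul8]),
      ← Finset.sum_div]
    congr 1; exact Finset.sum_congr rfl (fun t _ => mul_comm _ _)
  rw [key]
  rcases RootAux.spin_sum ε ε' hε hε' he he' with h|h|h|h|h <;> rw [h] <;> norm_num

lemma RootAux.ss_norm {v : EuclideanSpace ℝ (Fin 8)} {ε : Fin 8 → ℝ}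
    (hε : ∀ i, ε i = 1 ∨ ε i = -1) (hv : ∀ t, v t = ε t / (2 * Real.sqrt 2)) :
    ⟪v,v⟫ = 1 := by
  have key : ⟪v,v⟫ = ∑ _t : Fin 8, (1:ℝ)/8 := by
    rw [PiLp.inner_apply]
    simp only [RCLike.inner_apply, starRingEnd_apply, star_trivial]
    refine Finset.sum_congr rfl (fun t _ => ?_)
    rw [hv t, RootAux.aux_mul8]
    rcases hε t with h|h <;> rw [h] <;> norm_num
  rw [key, Finset.sum_const]
  norm_num

lemma RootAux.e8_inner {v w : EuclideanSpace ℝ (Fin 8)} (hv : v ∈ E8roots) (hw : w ∈ E8roots) :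
    ⟪v,w⟫ = 0 ∨ ⟪v,w⟫ = 1/2 ∨ ⟪v,w⟫ = -(1/2) ∨ ⟪v,w⟫ = 1 ∨ ⟪v,w⟫ = -1 := by
  rcases hv with hv | hv <;> rcases hw with hw | hw
  · exact RootAux.dd_inner hv hw
  · exact RootAux.ds_inner hv hw
  · rw [real_inner_comm]; exact RootAux.ds_inner hw hv
  · exact RootAux.ss_inner hv hw

lemma RootAux.e8_norm {v : EuclideanSpace ℝ (Fin 8)} (hv : v ∈ E8roots) : ⟪v,v⟫ = 1 := by
  rcases hv with ⟨i, j, hij, a, b, ha, hb, hv⟩ | ⟨ε, hε, -, hv⟩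
  · exact RootAux.dd_norm hij ha hb hv
  · exact RootAux.ss_norm hε hv

lemma RootAux.unit_eq {E : Type*} [NormedAddCommGroup E] [InnerProductSpace ℝ E] {v w : E}
    (hv : ⟪v,v⟫ = 1) (hw : ⟪w,w⟫ = 1) (h : ⟪v,w⟫ = 1) : v = w := by
  have h' : ⟪w,v⟫ = 1 := by rw [real_inner_comm]; exact h
  have h2 : ⟪v - w, v - w⟫ = 0 := by
    simp only [inner_sub_left, inner_sub_right, hv, hw, h, h']; norm_num
  exact sub_eq_zero.mp (inner_self_eq_zero.mp h2)

/-- Transfer of the inner-product classification along the isometry. -/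
lemma RootAux.key {E : Type*} [NormedAddCommGroup E] [InnerProductSpace ℝ E] {Φ : Set E}
    (hΦ : IsDERootSystem Φ) :
    (∀ v ∈ Φ, ⟪v,v⟫ = 1) ∧
    (∀ v ∈ Φ, ∀ w ∈ Φ, ⟪v,w⟫ = 0 ∨ ⟪v,w⟫ = 1/2 ∨ ⟪v,w⟫ = -(1/2) ∨ ⟪v,w⟫ = 1 ∨ ⟪v,w⟫ = -1) := by
  rcases hΦ with ⟨l, -, f, rfl⟩ | ⟨f, hΦ⟩
  · constructor
    · rintro v ⟨x, hx, rfl⟩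
      rw [f.inner_map_map]
      obtain ⟨i, j, hij, a, b, ha, hb, hx⟩ := hx
      exact RootAux.dd_norm hij ha hb hx
    · rintro v ⟨x, hx, rfl⟩ w ⟨y, hy, rfl⟩
      rw [f.inner_map_map]
      exact RootAux.dd_inner hx hy
  · have : ∃ S : Set (EuclideanSpace ℝ (Fin 8)), S ⊆ E8roots ∧ Φ = f '' S := by
      rcases hΦ with h | h | h
      · exact ⟨E6roots, fun v hv => hv.1, h⟩
      · exact ⟨E7roots, fun v hv => hv.1, h⟩
      · exact ⟨E8roots, fun v hv => hv, h⟩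
    obtain ⟨S, hS, rfl⟩ := this
    constructor
    · rintro v ⟨x, hx, rfl⟩
      rw [f.inner_map_map]
      exact RootAux.e8_norm (hS hx)
    · rintro v ⟨x, hx, rfl⟩ w ⟨y, hy, rfl⟩
      rw [f.inner_map_map]
      exact RootAux.e8_inner (hS hx) (hS hy)

end Aux

/-- Let `Ω = {β_{±1},…,β_{±k}}` be a maximal square in a root system of type
`D_l` (`l ≥ 5`) or `E_l`, and `ρ ∈ Φ` with `ρ ∉ Ω`, `-ρ ∉ Ω`. If
`(ρ,β_i) = (ρ,β_{-i}) = 0` for some `i`, then for every `j` either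
`(ρ,β_j) = (ρ,β_{-j}) = 0`, or one of `(ρ,β_j)`, `(ρ,β_{-j})` is `1/2` and the
other is `−1/2`. -/
theorem root_orthogonal_pair_propagates {E : Type*} [NormedAddCommGroup E]
    [InnerProductSpace ℝ E] {Φ : Set E} (hΦ : IsDERootSystem Φ)
    (k : ℕ) (β : Fin k → Bool → E) (hβ : IsMaximalSquare Φ k β)
    {ρ : E} (hρ : ρ ∈ Φ) (hρΩ : ∀ i b, ρ ≠ β i b) (hρΩ' : ∀ i b, -ρ ≠ β i b)
    (i₀ : Fin k) (h₀ : ⟪ρ, β i₀ true⟫ = 0 ∧ ⟪ρ, β i₀ false⟫ = 0) :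
    ∀ j : Fin k,
      (⟪ρ, β j true⟫ = 0 ∧ ⟪ρ, β j false⟫ = 0) ∨
      (⟪ρ, β j true⟫ = 1 / 2 ∧ ⟪ρ, β j false⟫ = -(1 / 2)) ∨
      (⟪ρ, β j true⟫ = -(1 / 2) ∧ ⟪ρ, β j false⟫ = 1 / 2) := by
  obtain ⟨hnorm, hpair⟩ := RootAux.key hΦ
  obtain ⟨hmem, horth, hhalf⟩ := hβ
  -- values of inner products with ρ are 0, 1/2 or -1/2
  have val : ∀ i b, ⟪ρ, β i b⟫ = 0 ∨ ⟪ρ, β i b⟫ = 1/2 ∨ ⟪ρ, β i b⟫ = -(1/2) := by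
    intro i b
    rcases hpair ρ hρ (β i b) (hmem i b) with h|h|h|h|h
    · exact Or.inl h
    · exact Or.inr (Or.inl h)
    · exact Or.inr (Or.inr h)
    · exact absurd (RootAux.unit_eq (hnorm ρ hρ) (hnorm _ (hmem i b)) h) (hρΩ i b)
    · exfalso
      have hn : ⟪-ρ, β i b⟫ = 1 := by rw [inner_neg_left, h]; norm_num
      have hnn : ⟪-ρ, -ρ⟫ = 1 := by rw [inner_neg_neg]; exact hnorm ρ hρ
      exact (hρΩ' i b) (RootAux.unit_eq hnn (hnorm _ (hmem i b)) hn)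
  intro j
  -- the sum of the two inner products is 0
  have hsum : ⟪ρ, β j true⟫ + ⟪ρ, β j false⟫ = 0 := by
    rcases eq_or_ne j i₀ with rfl | hne
    · rw [h₀.1, h₀.2, add_zero]
    · have n1 : ∀ i b, ⟪β i b, β i b⟫ = (1:ℝ) := fun i b => hnorm _ (hmem i b)
      have o1 : ⟪β j true, β j false⟫ = (0:ℝ) := horth j
      have o2 : ⟪β j false, β j true⟫ = (0:ℝ) := by rw [real_inner_comm]; exact horth j
      have o3 : ⟪β i₀ true, β i₀ false⟫ = (0:ℝ) := horth i₀
      have o4 : ⟪β i₀ false, β i₀ true⟫ = (0:ℝ) := by rw [real_inner_comm]; exact horth i₀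
      have c1 : ∀ b c, ⟪β j b, β i₀ c⟫ = (1:ℝ)/2 := hhalf j i₀ hne
      have c2 : ∀ b c, ⟪β i₀ b, β j c⟫ = (1:ℝ)/2 := hhalf i₀ j hne.symm
      have hz : ⟪(β j true + β j false) - (β i₀ true + β i₀ false),
          (β j true + β j false) - (β i₀ true + β i₀ false)⟫ = (0:ℝ) := by
        simp only [inner_sub_left, inner_sub_right, inner_add_left, inner_add_right,
          n1, o1, o2, o3, o4, c1, c2]
        norm_num
      have heq : β j true + β j false = β i₀ true + β i₀ false :=
        sub_eq_zero.mp (inner_self_eq_zero.mp hz)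
      have : ⟪ρ, β j true + β j false⟫ = ⟪ρ, β i₀ true + β i₀ false⟫ := by rw [heq]
      rw [inner_add_right, inner_add_right, h₀.1, h₀.2] at this
      rw [this, add_zero]
  rcases val j true with ht|ht|ht <;> rcases val j false with hf|hf|hf <;>
    rw [ht, hf] at hsum ⊢ <;> (revert hsum; norm_num)
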